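/- arXiv:2405.13592 — 8 statements merged into one kernel-verified Lean document; each statement's English description precedes it below -/
import Mathlib

section
/- Let (w_n) be a non-negative real sequence satisfying w_{n+1} ≤ (1 - a_n) w_n + b_n for all n ≥ 1, where (a_n) and (b_n) are non-negative sequences with ∑_{n=1}^∞ a_n = ∞ and ∑_{n=1}^∞ b_n < ∞. Then lim_{n→∞} w_n = 0. -/
/-!
Since `a n * w n ≥ 0`, the recursion gives `w (n + 1) ≤ w n + b n`, so `w n + ∑_{k ≥ n} b k` is
non-increasing and non-negative; as the tails of `∑ b` vanish, `w` converges to some `L ≥ 0`.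
Telescoping `a n * w n ≤ w n - w (n + 1) + b n` shows that `∑ a n * w n` converges. If `L > 0`,
then eventually `a n ≤ (2 / L) * (a n * w n)`, which would make `∑ a n` converge.
-/

open Filter Topology Finset

theorem not_summable_of_tendsto_sum_atTop {ι α : Type*} {a : ι → ℝ} (ha : ∀ i, 0 ≤ a i)
    {l : Filter α} [l.NeBot] {s : α → Finset ι}
    (h : Tendsto (fun x => ∑ i ∈ s x, a i) l atTop) : ¬Summable a := fun hsum =>
  let ⟨x, hx⟩ := (h.eventually_gt_atTop (∑' i, a i)).exists
  (hsum.sum_le_tsum (s x) fun i _ => ha i).not_gt hx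

theorem exists_tendsto_of_le_add_summable {w b : ℕ → ℝ} (hw : ∀ n, 0 ≤ w n)
    (hb : ∀ n, 0 ≤ b n) (hb_sum : Summable b) (hrec : ∀ n, w (n + 1) ≤ w n + b n) :
    ∃ L, Tendsto w atTop (𝓝 L) := by
  set v : ℕ → ℝ := fun n => w n + ∑' k, b (k + n)
  have hv_anti : Antitone v := antitone_nat_of_succ_le fun n => by
    have htail := ((summable_nat_add_iff n).2 hb_sum).tsum_eq_zero_add
    simp only [zero_add, add_right_comm _ 1 n] at htail
    show w (n + 1) + ∑' k, b (k + (n + 1)) ≤ w n + ∑' k, b (k + n)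
    simp only [htail, ← add_assoc]
    linarith [hrec n]
  have hv_bdd : BddBelow (Set.range v) := by
    refine ⟨0, ?_⟩
    rintro _ ⟨n, rfl⟩
    exact add_nonneg (hw n) (tsum_nonneg fun k => hb _)
  refine ⟨⨅ n, v n, ?_⟩
  simpa [v] using (tendsto_atTop_ciInf hv_anti hv_bdd).sub (tendsto_sum_nat_add b)

theorem summable_mul_of_le_sub_mul_add {w a b : ℕ → ℝ} (hw : ∀ n, 0 ≤ w n)
    (ha : ∀ n, 0 ≤ a n) (hb : ∀ n, 0 ≤ b n) (hb_sum : Summable b)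
    (hrec : ∀ n, w (n + 1) ≤ w n - a n * w n + b n) :
    Summable fun n => a n * w n := by
  have htelescope : ∀ N, ∑ n ∈ range N, a n * w n ≤ w 0 - w N + ∑ n ∈ range N, b n := by
    intro N
    induction N with
    | zero => simp
    | succ N ih =>
      rw [sum_range_succ, sum_range_succ]
      linarith [hrec N]
  refine summable_of_sum_range_le (c := w 0 + ∑' n, b n)
    (fun n => mul_nonneg (ha n) (hw n)) fun N => ?_
  linarith [htelescope N, hw N, hb_sum.sum_le_tsum (range N) fun n _ => hb n]

theorem tendsto_zero_of_le_one_sub_mul_add {w a b : ℕ → ℝ} (hw : ∀ n, 0 ≤ w n)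
    (ha : ∀ n, 0 ≤ a n) (hb : ∀ n, 0 ≤ b n)
    (hrec : ∀ n, w (n + 1) ≤ (1 - a n) * w n + b n)
    (ha_sum : ¬Summable a) (hb_sum : Summable b) :
    Tendsto w atTop (𝓝 0) := by
  have hrec' : ∀ n, w (n + 1) ≤ w n - a n * w n + b n := fun n => by
    simpa only [sub_mul, one_mul] using hrec n
  obtain ⟨L, hL⟩ := exists_tendsto_of_le_add_summable hw hb hb_sum fun n => by
    linarith [hrec' n, mul_nonneg (ha n) (hw n)]
  obtain rfl | hL_pos := (ge_of_tendsto' hL hw).eq_or_lt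
  · exact hL
  refine absurd ?_ ha_sum
  refine ((summable_mul_of_le_sub_mul_add hw ha hb hb_sum hrec').mul_left (2 / L))
    |>.of_norm_bounded_eventually_nat ?_
  filter_upwards [hL.eventually (lt_mem_nhds (half_lt_self hL_pos))] with n hn
  calc ‖a n‖ = 2 / L * (a n * (L / 2)) := by
        rw [Real.norm_of_nonneg (ha n)]
        field_simp
    _ ≤ 2 / L * (a n * w n) := by
        gcongr
        exact ha n

theorem stmt_0 (w a b : ℕ → ℝ)
    (hw : ∀ n, 0 ≤ w n) (ha : ∀ n, 0 ≤ a n) (hb : ∀ n, 0 ≤ b n)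
    (hrec : ∀ n, 1 ≤ n → w (n + 1) ≤ (1 - a n) * w n + b n)
    (hdiv : Tendsto (fun N => ∑ n ∈ Finset.Icc 1 N, a n) atTop atTop)
    (hsum : Summable b) :
    Tendsto w atTop (nhds 0) := by
  have ha_sum : ¬Summable fun n => a (n + 1) := by
    rw [summable_nat_add_iff]
    exact not_summable_of_tendsto_sum_atTop ha hdiv
  refine (tendsto_add_atTop_iff_nat 1).mp ?_
  exact tendsto_zero_of_le_one_sub_mul_add (fun n => hw _) (fun n => ha _) (fun n => hb _)
    (fun n => hrec (n + 1) le_add_self) ha_sum ((summable_nat_add_iff 1).2 hsum)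
end

section
/- (Robbins–Siegmund corollary.) Let (Ω, F, (F_n), P) be a filtered probability space and let (Y_n), (a_n), (b_n), (r_n) be non-negative adapted stochastic processes with ∑ a_n = ∞ almost surely, ∑ b_n < ∞ almost surely, and r_n > 0. If for each n, E[r_{n+1} Y_{n+1} | F_n] ≤ (1 - a_n) r_n Y_n + b_n, then r_n Y_n → 0 almost surely as n → ∞. -/
/-!
Write `Z n = r n * Y n`; the hypothesis says `E[Z (n+1) | ℱ n] ≤ Z n + b n - a n * Z n`.
The process `Z n + ∑_{k<n} (a k * Z k - b k)` is a supermartingale up to integrability; stopping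
its increments as soon as `∑ b` exceeds a level `M` makes it integrable and bounded below by `-M`,
so it converges a.s. Letting `M` run through `ℕ`, almost surely `Z n` converges and
`∑ a n * Z n < ∞`, and since `∑ a n = ∞` the limit of `Z n` can only be `0`.
-/

open Filter MeasureTheory Topology Finset

theorem eq_zero_of_tendsto_of_summable_mul {a z : ℕ → ℝ} {L : ℝ} (hz : Tendsto z atTop (𝓝 L))
    (hsum : Summable fun n => a n * z n)
    (hdiv : Tendsto (fun N => ∑ n ∈ range N, a n) atTop atTop) : L = 0 := by
  by_contra hL
  have hL_pos : 0 < ‖L‖ := norm_pos_iff.2 hL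
  have hz_far : ∀ᶠ n in atTop, ‖L‖ / 2 ≤ ‖z n‖ :=
    hz.norm.eventually (eventually_ge_nhds (half_lt_self hL_pos))
  have ha_bigO : a =O[atTop] fun n => a n * z n := by
    refine Asymptotics.IsBigO.of_bound (2 / ‖L‖) ?_
    filter_upwards [hz_far] with n hn
    rw [norm_mul, ← mul_assoc, mul_comm _ ‖a n‖, mul_assoc]
    refine le_mul_of_one_le_right (norm_nonneg _) ?_
    rw [div_mul_eq_mul_div, le_div_iff₀ hL_pos]
    linarith
  exact not_tendsto_nhds_of_tendsto_atTop hdiv _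
    (summable_of_isBigO_nat hsum ha_bigO).hasSum.tendsto_sum_nat

theorem tendsto_and_summable_of_tendsto_add_sum_sub {z b c : ℕ → ℝ} {u : ℝ}
    (hz : ∀ n, 0 ≤ z n) (hc : ∀ n, 0 ≤ c n) (hb : Summable b)
    (hu : Tendsto (fun n => z n + ∑ k ∈ range n, (c k - b k)) atTop (𝓝 u)) :
    (∃ L, Tendsto z atTop (𝓝 L)) ∧ Summable c := by
  have hw : Tendsto (fun n => z n + ∑ k ∈ range n, c k) atTop (𝓝 (u + ∑' k, b k)) := by
    convert hu.add hb.hasSum.tendsto_sum_nat using 2 with n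
    rw [sum_sub_distrib]
    ring
  obtain ⟨B, hB⟩ := hw.bddAbove_range
  have hc_sum : Summable c :=
    summable_of_sum_range_le hc fun n =>
      (le_add_of_nonneg_left (hz n)).trans (hB ⟨n, rfl⟩)
  refine ⟨⟨u + ∑' k, b k - ∑' k, c k, ?_⟩, hc_sum⟩
  convert hw.sub hc_sum.hasSum.tendsto_sum_nat using 2 with n
  ring

section Truncation

variable {z b c : ℕ → ℝ} {M : ℝ}

theorem add_sum_ite_eq_of_forall_lt (n : ℕ)
    (h : ∀ k < n, ∑ j ∈ range (k + 1), b j ≤ M) :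
    z 0 + ∑ k ∈ range n,
        (if ∑ j ∈ range (k + 1), b j ≤ M then z (k + 1) - (z k + b k - c k) else 0) =
      z n + ∑ k ∈ range n, (c k - b k) := by
  rw [sum_congr rfl fun k hk => if_pos (h k (mem_range.1 hk))]
  have htel := sum_range_sub z n
  simp only [sub_add_eq_sub_sub_swap, sub_sub_eq_add_sub, sum_sub_distrib, sum_add_distrib]
    at htel ⊢
  linarith

theorem neg_le_add_sum_ite (hz : ∀ n, 0 ≤ z n) (hb : ∀ n, 0 ≤ b n) (hc : ∀ n, 0 ≤ c n)
    (hM : 0 ≤ M) (n : ℕ) :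
    -M ≤ z 0 + ∑ k ∈ range n,
        (if ∑ j ∈ range (k + 1), b j ≤ M then z (k + 1) - (z k + b k - c k) else 0) := by
  induction n with
  | zero => simpa using (neg_nonpos.2 hM).trans (hz 0)
  | succ n ih =>
    by_cases hn : ∑ j ∈ range (n + 1), b j ≤ M
    · have hprefix : ∀ k < n + 1, ∑ j ∈ range (k + 1), b j ≤ M := fun k hk =>
        (sum_le_sum_of_subset_of_nonneg (range_subset_range.2 hk) fun j _ _ => hb j).trans hn
      rw [add_sum_ite_eq_of_forall_lt (n + 1) hprefix, sum_sub_distrib]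
      have := sum_nonneg fun k (_ : k ∈ range (n + 1)) => hc k
      linarith [hz (n + 1)]
    · rwa [sum_range_succ, if_neg hn, add_zero]

end Truncation

section RobbinsSiegmund

variable {Ω : Type*} {m0 : MeasurableSpace Ω} {μ : Measure Ω} [IsFiniteMeasure μ]
  {ℱ : Filtration ℕ m0}

theorem MeasureTheory.Supermartingale.exists_ae_tendsto_of_forall_le {f : ℕ → Ω → ℝ}
    (hf : Supermartingale f ℱ μ) {C : ℝ} (hC : ∀ n ω, C ≤ f n ω) :
    ∀ᵐ ω ∂μ, ∃ c, Tendsto (fun n => f n ω) atTop (𝓝 c) := by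
  have hL1 : ∀ n, eLpNorm (-f n) 1 μ ≤
      ENNReal.ofReal (∫ ω, f 0 ω ∂μ + 2 * |C| * μ.real Set.univ) := by
    intro n
    rw [eLpNorm_neg, eLpNorm_one_eq_lintegral_enorm,
      ← ofReal_integral_norm_eq_lintegral_enorm (hf.integrable n)]
    refine ENNReal.ofReal_le_ofReal ?_
    calc ∫ ω, ‖f n ω‖ ∂μ ≤ ∫ ω, (f n ω + 2 * |C|) ∂μ := by
          refine integral_mono (hf.integrable n).norm ((hf.integrable n).add (integrable_const _))
            fun ω => ?_
          rw [Real.norm_eq_abs, abs_le]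
          constructor <;> linarith [hC n ω, neg_abs_le C, abs_nonneg C]
      _ = ∫ ω, f n ω ∂μ + 2 * |C| * μ.real Set.univ := by
          rw [integral_add (hf.integrable n) (integrable_const _), integral_const, smul_eq_mul,
            mul_comm]
      _ ≤ ∫ ω, f 0 ω ∂μ + 2 * |C| * μ.real Set.univ := by
          simpa using hf.setIntegral_le (Nat.zero_le n) (@MeasurableSet.univ Ω (ℱ 0))
  filter_upwards [hf.neg.exists_ae_tendsto_of_bdd hL1] with ω ⟨c, hc⟩
  exact ⟨-c, by simpa using hc.neg⟩

theorem supermartingale_add_sum_of_condExp_nonpos {X₀ : Ω → ℝ} {ξ : ℕ → Ω → ℝ}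
    (hX₀ : StronglyMeasurable[ℱ 0] X₀) (hX₀_int : Integrable X₀ μ)
    (hξ : ∀ k, StronglyMeasurable[ℱ (k + 1)] (ξ k)) (hξ_int : ∀ k, Integrable (ξ k) μ)
    (hξ_cond : ∀ k, μ[ξ k | ℱ k] ≤ᵐ[μ] 0) :
    Supermartingale (fun n ω => X₀ ω + ∑ k ∈ range n, ξ k ω) ℱ μ := by
  refine supermartingale_of_condExp_sub_nonneg_nat (fun n => ?_) (fun n => ?_) fun n => ?_
  · exact (hX₀.mono (ℱ.mono (Nat.zero_le n))).add
      (Finset.stronglyMeasurable_fun_sum _ fun k hk => (hξ k).mono (ℱ.mono (mem_range.1 hk)))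
  · exact hX₀_int.add (integrable_finsetSum _ fun k _ => hξ_int k)
  · have hincr : (fun ω => X₀ ω + ∑ k ∈ range n, ξ k ω) -
        (fun ω => X₀ ω + ∑ k ∈ range (n + 1), ξ k ω) = -ξ n := by
      ext ω
      simp [sum_range_succ]
    rw [hincr]
    filter_upwards [condExp_neg (ξ n) (ℱ n), hξ_cond n] with ω hneg hω
    simpa [hneg] using hω

theorem condExp_indicator_sub_nonpos {m : MeasurableSpace Ω} (hm : m ≤ m0) {A : Set Ω}
    {X h : Ω → ℝ} (hA : MeasurableSet[m] A) (hX : Integrable X μ) (hh : StronglyMeasurable[m] h)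
    (hh_int : Integrable (A.indicator h) μ) (hle : μ[X | m] ≤ᵐ[μ] h) :
    μ[A.indicator (X - h) | m] ≤ᵐ[μ] 0 := by
  rw [Set.indicator_sub']
  filter_upwards [condExp_sub (hX.indicator (hm A hA)) hh_int m, condExp_indicator hX hA, hle]
    with ω hsub hind hω
  rw [hsub, Pi.sub_apply, hind, condExp_of_stronglyMeasurable hm (hh.indicator hA) hh_int]
  by_cases hωA : ω ∈ A <;> simp [hωA, hω]

theorem ae_exists_tendsto_of_condExp_le_of_sum_le {Z b c : ℕ → Ω → ℝ}
    (hZ : ∀ n ω, 0 ≤ Z n ω) (hb : ∀ n ω, 0 ≤ b n ω) (hc : ∀ n ω, 0 ≤ c n ω)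
    (hZad : StronglyAdapted ℱ Z) (hbad : StronglyAdapted ℱ b) (hcad : StronglyAdapted ℱ c)
    (hZint : ∀ n, Integrable (Z n) μ) (hrec : ∀ n, μ[Z (n + 1) | ℱ n] ≤ᵐ[μ] Z n + b n - c n)
    {M : ℝ} (hM : 0 ≤ M) :
    ∀ᵐ ω ∂μ, (∀ n, ∑ k ∈ range (n + 1), b k ω ≤ M) →
      ∃ u, Tendsto (fun n => Z n ω + ∑ k ∈ range n, (c k ω - b k ω)) atTop (𝓝 u) := by
  set A : ℕ → Set Ω := fun k => {ω | ∑ j ∈ range (k + 1), b j ω ≤ M}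
  set h : ℕ → Ω → ℝ := fun k => Z k + b k - c k
  have hA : ∀ k, MeasurableSet[ℱ k] (A k) := fun k =>
    measurableSet_le (Finset.stronglyMeasurable_fun_sum _ fun j hj =>
      (hbad j).mono (ℱ.mono (Nat.lt_succ_iff.1 (mem_range.1 hj)))).measurable measurable_const
  have hh : StronglyAdapted ℱ h := fun k => ((hZad k).add (hbad k)).sub (hcad k)
  have hh_int : ∀ k, Integrable ((A k).indicator (h k)) μ := by
    intro k
    refine Integrable.mono' ((hZint k).add (integrable_const M))
      (((hh k).mono (ℱ.le k)).indicator (ℱ.le k _ (hA k))).aestronglyMeasurable ?_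
    -- `h k` dominates a conditional expectation of the nonnegative `Z (k + 1)`
    filter_upwards [hrec k, condExp_nonneg (m := ℱ k) (Eventually.of_forall (hZ (k + 1)))]
      with ω hω hpos
    by_cases hωA : ω ∈ A k
    · have hbM : b k ω ≤ M :=
        (single_le_sum (fun j _ => hb j ω) (self_mem_range_succ k)).trans hωA
      simp only [Set.indicator_of_mem hωA, Real.norm_eq_abs, Pi.add_apply, h, Pi.sub_apply,
        Pi.zero_apply] at hω hpos ⊢
      rw [abs_of_nonneg (hpos.trans hω)]
      linarith [hc k ω]
    · simpa [Set.indicator_of_notMem hωA] using (hZ k ω).trans (le_add_of_nonneg_right hM)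
  -- the increments are switched off once `∑ b` exceeds `M`, which keeps `V` above `-M`
  set V : ℕ → Ω → ℝ := fun n ω => Z 0 ω + ∑ k ∈ range n, (A k).indicator (Z (k + 1) - h k) ω
  have hV : Supermartingale V ℱ μ :=
    supermartingale_add_sum_of_condExp_nonpos (hZad 0) (hZint 0)
      (fun k => ((hZad (k + 1)).sub ((hh k).mono (ℱ.mono k.le_succ))).indicator
        (ℱ.mono k.le_succ _ (hA k)))
      (fun k => ((hZint (k + 1)).indicator (ℱ.le k _ (hA k))).sub (hh_int k) |>.congr
        (Eventually.of_forall fun ω => by simp [Set.indicator_sub']))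
      fun k => condExp_indicator_sub_nonpos (ℱ.le k) (hA k) (hZint (k + 1)) (hh k) (hh_int k)
        (hrec k)
  have hV_eq : ∀ n ω, V n ω = Z 0 ω + ∑ k ∈ range n,
      (if ∑ j ∈ range (k + 1), b j ω ≤ M then Z (k + 1) ω - (Z k ω + b k ω - c k ω) else 0) :=
    fun n ω => by simp [V, A, h, Set.indicator_apply]
  filter_upwards [hV.exists_ae_tendsto_of_forall_le fun n ω =>
    (hV_eq n ω).symm ▸ neg_le_add_sum_ite (hZ · ω) (hb · ω) (hc · ω) hM n] with ω ⟨u, hu⟩ hω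
  refine ⟨u, hu.congr fun n => ?_⟩
  rw [hV_eq]
  exact add_sum_ite_eq_of_forall_lt (z := (Z · ω)) (c := (c · ω)) n fun k _ => hω k

theorem ae_tendsto_and_summable_of_condExp_le {Z b c : ℕ → Ω → ℝ}
    (hZ : ∀ n ω, 0 ≤ Z n ω) (hb : ∀ n ω, 0 ≤ b n ω) (hc : ∀ n ω, 0 ≤ c n ω)
    (hZad : StronglyAdapted ℱ Z) (hbad : StronglyAdapted ℱ b) (hcad : StronglyAdapted ℱ c)
    (hZint : ∀ n, Integrable (Z n) μ) (hrec : ∀ n, μ[Z (n + 1) | ℱ n] ≤ᵐ[μ] Z n + b n - c n)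
    (hb_sum : ∀ᵐ ω ∂μ, Summable fun n => b n ω) :
    ∀ᵐ ω ∂μ, (∃ L, Tendsto (fun n => Z n ω) atTop (𝓝 L)) ∧ Summable fun n => c n ω := by
  have hM : ∀ᵐ ω ∂μ, ∀ M : ℕ, (∀ n, ∑ k ∈ range (n + 1), b k ω ≤ M) →
      ∃ u, Tendsto (fun n => Z n ω + ∑ k ∈ range n, (c k ω - b k ω)) atTop (𝓝 u) :=
    ae_all_iff.2 fun M => ae_exists_tendsto_of_condExp_le_of_sum_le hZ hb hc hZad hbad hcad hZint
      hrec M.cast_nonneg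
  filter_upwards [hM, hb_sum] with ω hω hsum
  obtain ⟨M, hM⟩ := exists_nat_ge (∑' k, b k ω)
  obtain ⟨u, hu⟩ := hω M fun n => (hsum.sum_le_tsum _ fun k _ => hb k ω).trans hM
  exact tendsto_and_summable_of_tendsto_add_sum_sub (hZ · ω) (hc · ω) hsum hu

end RobbinsSiegmund

theorem stmt_10 {Ω : Type*} {m0 : MeasurableSpace Ω} (μ : Measure Ω) [IsProbabilityMeasure μ]
    (ℱ : Filtration ℕ m0)
    (Y a b r : ℕ → Ω → ℝ)
    (hY : ∀ n ω, 0 ≤ Y n ω) (ha : ∀ n ω, 0 ≤ a n ω) (hb : ∀ n ω, 0 ≤ b n ω)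
    (hr : ∀ n ω, 0 < r n ω)
    (hYad : StronglyAdapted ℱ Y) (haad : StronglyAdapted ℱ a) (hbad : StronglyAdapted ℱ b) (hrad : StronglyAdapted ℱ r)
    (hint : ∀ n, Integrable (fun ω => r n ω * Y n ω) μ)
    (hdiva : ∀ᵐ ω ∂μ, Tendsto (fun N => ∑ n ∈ Finset.range N, a n ω) atTop atTop)
    (hsumb : ∀ᵐ ω ∂μ, Summable (fun n => b n ω))
    (hrec : ∀ n, ∀ᵐ ω ∂μ,
      (μ[fun ω' => r (n+1) ω' * Y (n+1) ω' | ℱ n]) ω ≤ (1 - a n ω) * r n ω * Y n ω + b n ω) :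
    ∀ᵐ ω ∂μ, Tendsto (fun n => r n ω * Y n ω) atTop (nhds 0) := by
  set Z : ℕ → Ω → ℝ := fun n ω => r n ω * Y n ω
  have hZ : ∀ n ω, 0 ≤ Z n ω := fun n ω => mul_nonneg (hr n ω).le (hY n ω)
  have hrec' : ∀ n, μ[Z (n + 1) | ℱ n] ≤ᵐ[μ] Z n + b n - a n * Z n := fun n => by
    filter_upwards [hrec n] with ω hω
    simp only [Pi.add_apply, Pi.sub_apply, Pi.mul_apply, Z]
    linarith
  have hZad : StronglyAdapted ℱ Z := fun n => (hrad n).mul (hYad n)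
  filter_upwards [ae_tendsto_and_summable_of_condExp_le hZ hb
      (fun n ω => mul_nonneg (ha n ω) (hZ n ω)) hZad hbad (fun n => (haad n).mul (hZad n)) hint
      hrec' hsumb, hdiva] with ω ⟨⟨L, hL⟩, hsum⟩ hdiv
  rwa [eq_zero_of_tendsto_of_summable_mul hL hsum hdiv] at hL
end

section
/- Let (Y_n) be non-negative random variables adapted to a filtration (F_n) with E[Y_{n+1} | F_n] ≤ (1 + c₁γ_n²)Y_n - c₂γ_n Y_n^{2β} + c₃γ_n², where β ∈ (1/2, 1], c₁, c₃ ≥ 0, c₂ > 0, and γ_n = Θ(n^{-θ}) for θ ∈ (1/2, 1). Then for any η ∈ (max{2-2θ, (θ+2β-2)/(2β-1)}, 1), Y_n → 0 almost surely with rate Y_n ∈ o(n^{-(1-η)}) a.s. -/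
open Filter MeasureTheory Finset Topology

/-!
For `V n = n ^ (1 - η) * Y n` the recursion becomes, after Young's inequality
`A t - B t ^ p ≤ A (A / B) ^ (1 / (p - 1))` absorbs the growth of the weights and the
`c₁ γ n ^ 2` term into half of the dissipation,
`E[V (n+1) | ℱ n] ≤ V n - U n + e n` with `U n ≍ n ^ (1 - η - θ) * Y n ^ (2β)` and a deterministic
error `e n`. The lower bounds on `η` are exactly what makes `e` summable, so by Robbins–Siegmund
`V n` converges a.s. and `∑ U n < ∞`. A positive limit `L` would give
`U n ≳ L ^ (2β) n ^ (1 - η - θ - 2β (1 - η))`, whose exponent is `≥ -1` by the same bound on `η`;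
hence `L = 0`.
-/

theorem mul_sub_mul_rpow_le {A B t p : ℝ} (hA : 0 ≤ A) (hB : 0 < B) (ht : 0 ≤ t) (hp : 1 < p) :
    A * t - B * t ^ p ≤ A * (A / B) ^ (p - 1)⁻¹ := by
  set s := (A / B) ^ (p - 1)⁻¹
  have hs : 0 ≤ s := Real.rpow_nonneg (div_nonneg hA hB.le) _
  rcases le_or_gt t s with hts | hst
  · nlinarith [mul_le_mul_of_nonneg_left hts hA, mul_nonneg hB.le (Real.rpow_nonneg ht p)]
  · have hAB : A / B ≤ t ^ (p - 1) := by
      simpa [s, Real.rpow_inv_rpow (div_nonneg hA hB.le) (sub_pos.2 hp).ne'] using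
        Real.rpow_le_rpow hs hst.le (sub_pos.2 hp).le
    have hAt : A * t ≤ B * t ^ p := by
      calc A * t ≤ B * t ^ (p - 1) * t := by
            gcongr; rwa [div_le_iff₀' hB] at hAB
        _ = B * t ^ p := by
            rw [mul_assoc, ← Real.rpow_add_one (hs.trans_lt hst).ne', sub_add_cancel]
    nlinarith [mul_nonneg hA hs]

theorem rpow_add_one_sub_rpow_le {s x : ℝ} (hs₀ : 0 ≤ s) (hs₁ : s ≤ 1) (hx : 0 < x) :
    (x + 1) ^ s - x ^ s ≤ x ^ (s - 1) := by
  have hbern : (1 + x⁻¹) ^ s ≤ 1 + s * x⁻¹ :=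
    rpow_one_add_le_one_add_mul_self (by linarith [inv_pos.2 hx]) hs₀ hs₁
  have hsplit : (x + 1) ^ s = x ^ s * (1 + x⁻¹) ^ s := by
    rw [← Real.mul_rpow hx.le (by positivity), mul_add, mul_inv_cancel₀ hx.ne', mul_one]
  have hxs : x ^ s * x⁻¹ = x ^ (s - 1) := by
    rw [Real.rpow_sub_one hx.ne', div_eq_mul_inv]
  calc (x + 1) ^ s - x ^ s ≤ x ^ s * (1 + s * x⁻¹) - x ^ s := by
        rw [hsplit]; gcongr
    _ = s * x ^ (s - 1) := by rw [← hxs]; ring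
    _ ≤ x ^ (s - 1) := mul_le_of_le_one_left (by positivity) hs₁

theorem rpow_add_one_le_two_mul_rpow {s x : ℝ} (hs₀ : 0 ≤ s) (hs₁ : s ≤ 1) (hx : 1 ≤ x) :
    (x + 1) ^ s ≤ 2 * x ^ s := by
  calc (x + 1) ^ s ≤ (2 * x) ^ s := by gcongr; linarith
    _ = 2 ^ s * x ^ s := Real.mul_rpow zero_le_two (by linarith)
    _ ≤ 2 * x ^ s := by
        gcongr
        simpa using Real.rpow_le_rpow_of_exponent_le one_le_two hs₁

theorem summable_of_eventually_le_mul_rpow {f : ℕ → ℝ} {C r : ℝ} (hf : ∀ n, 0 ≤ f n)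
    (hle : ∀ᶠ n : ℕ in atTop, f n ≤ C * (n : ℝ) ^ r) (hr : r < -1) : Summable f :=
  ((Real.summable_nat_rpow.2 hr).mul_left C).of_norm_bounded_eventually_nat <| by
    filter_upwards [hle] with n hn
    rwa [Real.norm_of_nonneg (hf n)]

theorem summable_mul_div_rpow {A B : ℕ → ℝ} {K c α β q : ℝ} (hA₀ : ∀ n, 0 ≤ A n)
    (hB₀ : ∀ n, 0 < B n) (hc : 0 < c) (hq : 0 ≤ q)
    (hA : ∀ᶠ n : ℕ in atTop, A n ≤ K * (n : ℝ) ^ α)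
    (hB : ∀ᶠ n : ℕ in atTop, c * (n : ℝ) ^ β ≤ B n) (hexp : α + (α - β) * q < -1) :
    Summable fun n => A n * (A n / B n) ^ q := by
  refine summable_of_eventually_le_mul_rpow
    (fun n => mul_nonneg (hA₀ n) (Real.rpow_nonneg (div_nonneg (hA₀ n) (hB₀ n).le) q))
    ?_ hexp (C := K * (K / c) ^ q)
  filter_upwards [eventually_gt_atTop 0, hA, hB] with n hn hAn hBn
  have hx : (0 : ℝ) < n := Nat.cast_pos.2 hn
  have hK : 0 ≤ K := nonneg_of_mul_nonneg_left ((hA₀ n).trans hAn) (by positivity)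
  have hratio : A n / B n ≤ K / c * (n : ℝ) ^ (α - β) := by
    calc A n / B n ≤ K * (n : ℝ) ^ α / (c * (n : ℝ) ^ β) :=
          div_le_div₀ (by positivity) hAn (by positivity) hBn
      _ = K / c * (n : ℝ) ^ (α - β) := by rw [Real.rpow_sub hx, mul_div_mul_comm]
  calc A n * (A n / B n) ^ q ≤ K * (n : ℝ) ^ α * (K / c * (n : ℝ) ^ (α - β)) ^ q := by
        have hAB := div_nonneg (hA₀ n) (hB₀ n).le
        gcongr
    _ = K * (K / c) ^ q * (n : ℝ) ^ (α + (α - β) * q) := by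
        rw [Real.mul_rpow (by positivity) (by positivity), ← Real.rpow_mul hx.le,
          Real.rpow_add hx]
        ring

theorem eq_zero_of_tendsto_rpow_mul_of_summable {y b : ℕ → ℝ} {s p ρ c L : ℝ}
    (hy : ∀ n, 0 ≤ y n) (hp : 0 ≤ p) (hc : 0 < c)
    (hb : ∀ᶠ n : ℕ in atTop, c * (n : ℝ) ^ ρ ≤ b n) (hρ : -1 ≤ ρ - s * p)
    (hlim : Tendsto (fun n : ℕ => (n : ℝ) ^ s * y n) atTop (𝓝 L))
    (hsum : Summable fun n => b n * y n ^ p) : L = 0 := by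
  have hL₀ : 0 ≤ L :=
    ge_of_tendsto' hlim fun n => mul_nonneg (Real.rpow_nonneg n.cast_nonneg _) (hy n)
  refine (hL₀.eq_or_lt.resolve_right fun hL => ?_).symm
  have hC : 0 < c * (L / 2) ^ p := by positivity
  have hpow : Summable fun n : ℕ => (n : ℝ) ^ (ρ - s * p) := by
    refine (hsum.mul_left (c * (L / 2) ^ p)⁻¹).of_norm_bounded_eventually_nat ?_
    filter_upwards [eventually_gt_atTop 0, hb,
      hlim.eventually (eventually_ge_nhds (half_lt_self hL))] with n hn hbn hyn
    have hx : (0 : ℝ) < n := Nat.cast_pos.2 hn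
    have hy_ge : L / 2 * (n : ℝ) ^ (-s) ≤ y n := by
      calc L / 2 * (n : ℝ) ^ (-s) ≤ (n : ℝ) ^ s * y n * (n : ℝ) ^ (-s) := by gcongr
        _ = y n := by
          rw [mul_right_comm, ← Real.rpow_add hx, add_neg_cancel, Real.rpow_zero, one_mul]
    have hlower : c * (L / 2) ^ p * (n : ℝ) ^ (ρ - s * p) ≤ b n * y n ^ p := by
      calc c * (L / 2) ^ p * (n : ℝ) ^ (ρ - s * p)
          = c * (n : ℝ) ^ ρ * (L / 2 * (n : ℝ) ^ (-s)) ^ p := by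
            rw [Real.mul_rpow (by positivity) (by positivity), ← Real.rpow_mul hx.le, neg_mul,
              sub_eq_add_neg, Real.rpow_add hx]
            ring
        _ ≤ b n * y n ^ p := by
            gcongr
            exact (by positivity : (0 : ℝ) ≤ c * (n : ℝ) ^ ρ).trans hbn
    rw [Real.norm_of_nonneg (by positivity), le_inv_mul_iff₀ hC]
    exact hlower
  exact absurd (Real.summable_nat_rpow.1 hpow) (not_lt.2 hρ)

namespace MeasureTheory

theorem integrable_of_condExp_le_sub {Ω : Type*} {m m0 : MeasurableSpace Ω} {μ : Measure Ω}
    [IsFiniteMeasure μ] {X Z W : Ω → ℝ} {a κ δ : ℝ} (hX : 0 ≤ᵐ[μ] X) (hZ : Integrable Z μ)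
    (hW : AEStronglyMeasurable W μ) (hW₀ : 0 ≤ᵐ[μ] W) (hκ : 0 < κ)
    (hle : ∀ᵐ ω ∂μ, μ[X | m] ω ≤ a * Z ω - κ * W ω + δ) : Integrable W μ := by
  refine (((hZ.const_mul a).add (integrable_const δ)).const_mul κ⁻¹).mono' hW ?_
  filter_upwards [condExp_nonneg (m := m) hX, hle, hW₀] with ω h₀ hω hW₀ω
  rw [Real.norm_of_nonneg hW₀ω, le_inv_mul_iff₀ hκ, Pi.add_apply]
  linarith [show 0 ≤ μ[X | m] ω from h₀]

variable {Ω : Type*} {m0 : MeasurableSpace Ω} {μ : Measure Ω} {ℱ : Filtration ℕ m0}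

theorem Supermartingale.exists_ae_tendsto_of_forall_le_s11 [IsFiniteMeasure μ] {f : ℕ → Ω → ℝ}
    {b : ℝ} (hf : Supermartingale f ℱ μ) (hb : ∀ n ω, b ≤ f n ω) :
    ∀ᵐ ω ∂μ, ∃ c, Tendsto (fun n => f n ω) atTop (𝓝 c) := by
  have hL1 : ∀ n, eLpNorm ((-f) n) 1 μ ≤ ENNReal.ofReal (∫ ω, f 0 ω ∂μ + ∫ _, 2 * |b| ∂μ) := by
    intro n
    have hint := hf.integrable n
    rw [Pi.neg_apply, eLpNorm_neg, eLpNorm_one_eq_lintegral_enorm,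
      ← ofReal_integral_norm_eq_lintegral_enorm hint]
    refine ENNReal.ofReal_le_ofReal ?_
    calc ∫ ω, ‖f n ω‖ ∂μ ≤ ∫ ω, (f n ω + 2 * |b|) ∂μ :=
          integral_mono hint.norm (hint.add (integrable_const _)) fun ω => by
            have := hb n ω
            rw [Real.norm_eq_abs]
            cases abs_cases (f n ω) <;> cases abs_cases b <;> linarith
      _ ≤ ∫ ω, f 0 ω ∂μ + ∫ _, 2 * |b| ∂μ := by
          rw [integral_add hint (integrable_const _)]
          simpa using hf.setIntegral_le (Nat.zero_le n) MeasurableSet.univ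
  filter_upwards [hf.neg.exists_ae_tendsto_of_bdd hL1] with ω ⟨c, hc⟩
  exact ⟨-c, by simpa using hc.neg⟩

def robbinsSiegmundProcess (V U : ℕ → Ω → ℝ) (e : ℕ → ℝ) (n : ℕ) (ω : Ω) : ℝ :=
  V n ω + ∑ k ∈ range n, (U k ω - e k)

variable {V U : ℕ → Ω → ℝ} {e : ℕ → ℝ}

theorem supermartingale_robbinsSiegmundProcess [IsFiniteMeasure μ]
    (hV : StronglyAdapted ℱ V) (hU : StronglyAdapted ℱ U)
    (hVi : ∀ n, Integrable (V n) μ) (hUi : ∀ n, Integrable (U n) μ)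
    (hrec : ∀ n, ∀ᵐ ω ∂μ, μ[V (n + 1) | ℱ n] ω ≤ V n ω - U n ω + e n) :
    Supermartingale (robbinsSiegmundProcess V U e) ℱ μ := by
  have hSi : ∀ n, Integrable (fun ω => ∑ k ∈ range n, (U k ω - e k)) μ := fun n =>
    integrable_finsetSum _ fun k _ => (hUi k).sub (integrable_const _)
  have hSm : ∀ n j, n ≤ j + 1 →
      StronglyMeasurable[ℱ j] fun ω => ∑ k ∈ range n, (U k ω - e k) := fun n j hnj =>
    Finset.stronglyMeasurable_fun_sum _ fun k hk =>
      (hU.stronglyMeasurable_le (by have := mem_range.1 hk; omega)).sub stronglyMeasurable_const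
  refine supermartingale_nat (fun n => (hV n).add (hSm n n n.le_succ))
    (fun n => (hVi n).add (hSi n)) fun n => ?_
  have hsplit : robbinsSiegmundProcess V U e (n + 1) =
      V (n + 1) + fun ω => ∑ k ∈ range (n + 1), (U k ω - e k) := rfl
  rw [hsplit]
  filter_upwards [condExp_add (hVi (n + 1)) (hSi (n + 1)) (ℱ n), hrec n] with ω hadd hω
  rw [hadd, Pi.add_apply, condExp_of_stronglyMeasurable (ℱ.le n) (hSm _ n le_rfl) (hSi (n + 1))]
  simp only [robbinsSiegmundProcess, sum_range_succ]
  linarith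

theorem ae_tendsto_and_summable_of_condExp_le [IsFiniteMeasure μ]
    (hV : StronglyAdapted ℱ V) (hU : StronglyAdapted ℱ U)
    (hVi : ∀ n, Integrable (V n) μ) (hUi : ∀ n, Integrable (U n) μ)
    (hV0 : ∀ n ω, 0 ≤ V n ω) (hU0 : ∀ n ω, 0 ≤ U n ω) (he0 : ∀ n, 0 ≤ e n) (he : Summable e)
    (hrec : ∀ n, ∀ᵐ ω ∂μ, μ[V (n + 1) | ℱ n] ω ≤ V n ω - U n ω + e n) :
    ∀ᵐ ω ∂μ, (∃ c, Tendsto (fun n => V n ω) atTop (𝓝 c)) ∧ Summable fun n => U n ω := by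
  have he_le : ∀ n, ∑ k ∈ range n, e k ≤ ∑' k, e k := fun n => he.sum_le_tsum _ fun k _ => he0 k
  have hZ_ge : ∀ n ω, -∑' k, e k ≤ robbinsSiegmundProcess V U e n ω := by
    intro n ω
    have := sum_nonneg fun k (_ : k ∈ range n) => hU0 k ω
    simp only [robbinsSiegmundProcess, sum_sub_distrib]
    linarith [hV0 n ω, he_le n]
  filter_upwards [(supermartingale_robbinsSiegmundProcess hV hU hVi hUi hrec
    ).exists_ae_tendsto_of_forall_le_s11 hZ_ge] with ω ⟨c, hc⟩
  obtain ⟨M, hM⟩ := hc.bddAbove_range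
  have hU_sum : Summable fun n => U n ω := by
    refine summable_of_sum_range_le (c := M + ∑' k, e k) (fun n => hU0 n ω) fun n => ?_
    have hZ : robbinsSiegmundProcess V U e n ω ≤ M := hM ⟨n, rfl⟩
    simp only [robbinsSiegmundProcess, sum_sub_distrib] at hZ
    linarith [hV0 n ω, he_le n]
  refine ⟨⟨c - ∑' k, (U k ω - e k), ?_⟩, hU_sum⟩
  have hV_eq : (fun n => V n ω) =
      fun n => robbinsSiegmundProcess V U e n ω - ∑ k ∈ range n, (U k ω - e k) := by
    ext n; simp [robbinsSiegmundProcess]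
  rw [hV_eq]
  exact hc.sub (hU_sum.sub he).hasSum.tendsto_sum_nat

end MeasureTheory

noncomputable section

variable (γ : ℕ → ℝ) (c₁ c₂ c₃ η p : ℝ)

/- `rateDrift n * Y n ^ p` and `rateError n` are the `U n` and `e n` above; `rateGain n` is the
excess coefficient of `Y n` created by the weights, which Young's inequality trades for `e n`. -/
def rateGain (n : ℕ) : ℝ :=
  ((n + 1 : ℕ) : ℝ) ^ (1 - η) * (1 + c₁ * γ n ^ 2) - (n : ℝ) ^ (1 - η)

def rateDrift (n : ℕ) : ℝ :=
  c₂ / 2 * γ n * ((n + 1 : ℕ) : ℝ) ^ (1 - η)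

def rateError (n : ℕ) : ℝ :=
  rateGain γ c₁ η n * (rateGain γ c₁ η n / rateDrift γ c₂ η n) ^ (p - 1)⁻¹
    + c₃ * ((n + 1 : ℕ) : ℝ) ^ (1 - η) * γ n ^ 2

variable {γ c₁ c₂ c₃ η p}

theorem rateGain_nonneg (hc₁ : 0 ≤ c₁) (hη : η ≤ 1) (n : ℕ) : 0 ≤ rateGain γ c₁ η n := by
  have hmono : (n : ℝ) ^ (1 - η) ≤ ((n + 1 : ℕ) : ℝ) ^ (1 - η) := by gcongr; linarith
  have : ((n + 1 : ℕ) : ℝ) ^ (1 - η) ≤ ((n + 1 : ℕ) : ℝ) ^ (1 - η) * (1 + c₁ * γ n ^ 2) :=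
    le_mul_of_one_le_right (by positivity) (by nlinarith [sq_nonneg (γ n)])
  unfold rateGain; linarith

theorem rateDrift_pos (hc₂ : 0 < c₂) (hγ : ∀ n, 0 < γ n) (n : ℕ) : 0 < rateDrift γ c₂ η n := by
  have := hγ n
  unfold rateDrift; positivity

theorem rateError_nonneg (hc₁ : 0 ≤ c₁) (hc₂ : 0 < c₂) (hc₃ : 0 ≤ c₃) (hη : η ≤ 1)
    (hγ : ∀ n, 0 < γ n) (n : ℕ) : 0 ≤ rateError γ c₁ c₂ c₃ η p n := by
  have hA := rateGain_nonneg (γ := γ) hc₁ hη n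
  have hB := rateDrift_pos (η := η) hc₂ hγ n
  unfold rateError; positivity

theorem weighted_recursion_le (hc₁ : 0 ≤ c₁) (hc₂ : 0 < c₂) (hη : η ≤ 1) (hγ : ∀ n, 0 < γ n)
    (hp : 1 < p) (n : ℕ) {t : ℝ} (ht : 0 ≤ t) :
    ((n + 1 : ℕ) : ℝ) ^ (1 - η) * ((1 + c₁ * γ n ^ 2) * t - c₂ * γ n * t ^ p + c₃ * γ n ^ 2)
      ≤ (n : ℝ) ^ (1 - η) * t - rateDrift γ c₂ η n * t ^ p + rateError γ c₁ c₂ c₃ η p n := by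
  have hyoung := mul_sub_mul_rpow_le (rateGain_nonneg (γ := γ) hc₁ hη n)
    (rateDrift_pos (η := η) hc₂ hγ n) ht hp
  unfold rateError rateGain rateDrift at *
  linarith

theorem ae_condExp_weighted_le {Ω : Type*} {m m0 : MeasurableSpace Ω} {μ : Measure Ω}
    {X Z : Ω → ℝ} (hc₁ : 0 ≤ c₁) (hc₂ : 0 < c₂) (hη : η ≤ 1) (hγ : ∀ n, 0 < γ n) (hp : 1 < p)
    (n : ℕ) (hZ : ∀ ω, 0 ≤ Z ω)
    (hrec : ∀ᵐ ω ∂μ, μ[X | m] ω ≤ (1 + c₁ * γ n ^ 2) * Z ω - c₂ * γ n * Z ω ^ p + c₃ * γ n ^ 2) :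
    ∀ᵐ ω ∂μ, μ[fun ω => ((n + 1 : ℕ) : ℝ) ^ (1 - η) * X ω | m] ω ≤
      (n : ℝ) ^ (1 - η) * Z ω - rateDrift γ c₂ η n * Z ω ^ p + rateError γ c₁ c₂ c₃ η p n := by
  filter_upwards [condExp_smul (((n + 1 : ℕ) : ℝ) ^ (1 - η)) X m, hrec] with ω hsmul hω
  calc μ[fun ω => ((n + 1 : ℕ) : ℝ) ^ (1 - η) * X ω | m] ω
      = ((n + 1 : ℕ) : ℝ) ^ (1 - η) * μ[X | m] ω := hsmul
    _ ≤ _ := mul_le_mul_of_nonneg_left hω (by positivity)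
    _ ≤ _ := weighted_recursion_le hc₁ hc₂ hη hγ hp n (hZ ω)

theorem eventually_rpow_mul_sq_le {C₂ θ : ℝ} (hη₀ : 0 ≤ η) (hη₁ : η ≤ 1) (hγ : ∀ n, 0 < γ n)
    (hγle : ∀ᶠ n : ℕ in atTop, γ n ≤ C₂ * (n : ℝ) ^ (-θ)) :
    ∀ᶠ n : ℕ in atTop,
      ((n + 1 : ℕ) : ℝ) ^ (1 - η) * γ n ^ 2 ≤ 2 * C₂ ^ 2 * (n : ℝ) ^ (1 - η - 2 * θ) := by
  filter_upwards [eventually_ge_atTop 1, hγle] with n hn hγn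
  have hx : (1 : ℝ) ≤ n := Nat.one_le_cast.2 hn
  have hsq : γ n ^ 2 ≤ C₂ ^ 2 * (n : ℝ) ^ (-(2 * θ)) := by
    calc γ n ^ 2 ≤ (C₂ * (n : ℝ) ^ (-θ)) ^ 2 := pow_le_pow_left₀ (hγ n).le hγn 2
      _ = C₂ ^ 2 * (n : ℝ) ^ (-(2 * θ)) := by
        rw [mul_pow, ← Real.rpow_mul_natCast (by linarith)]
        ring_nf
  calc ((n + 1 : ℕ) : ℝ) ^ (1 - η) * γ n ^ 2
      ≤ 2 * (n : ℝ) ^ (1 - η) * (C₂ ^ 2 * (n : ℝ) ^ (-(2 * θ))) := by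
        push_cast
        gcongr
        exact rpow_add_one_le_two_mul_rpow (by linarith) (by linarith) hx
    _ = 2 * C₂ ^ 2 * (n : ℝ) ^ (1 - η - 2 * θ) := by
        rw [sub_eq_add_neg _ (2 * θ), Real.rpow_add (by linarith)]
        ring

theorem eventually_rateGain_le {C₂ θ : ℝ} (hc₁ : 0 ≤ c₁) (hη₀ : 0 ≤ η) (hη₁ : η ≤ 1)
    (hθ : 1 / 2 ≤ θ) (hγ : ∀ n, 0 < γ n) (hγle : ∀ᶠ n : ℕ in atTop, γ n ≤ C₂ * (n : ℝ) ^ (-θ)) :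
    ∀ᶠ n : ℕ in atTop, rateGain γ c₁ η n ≤ (1 + 2 * c₁ * C₂ ^ 2) * (n : ℝ) ^ (-η) := by
  filter_upwards [eventually_ge_atTop 1, eventually_rpow_mul_sq_le hη₀ hη₁ hγ hγle]
    with n hn hsq
  have hx : (1 : ℝ) ≤ n := Nat.one_le_cast.2 hn
  have hdiff : ((n + 1 : ℕ) : ℝ) ^ (1 - η) - (n : ℝ) ^ (1 - η) ≤ (n : ℝ) ^ (-η) := by
    simpa using rpow_add_one_sub_rpow_le (s := 1 - η) (by linarith) (by linarith)
      (by linarith : (0 : ℝ) < n)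
  have hdecay : (n : ℝ) ^ (1 - η - 2 * θ) ≤ (n : ℝ) ^ (-η) :=
    Real.rpow_le_rpow_of_exponent_le hx (by linarith)
  have hnoise : c₁ * (((n + 1 : ℕ) : ℝ) ^ (1 - η) * γ n ^ 2) ≤ c₁ * (2 * C₂ ^ 2 * (n : ℝ) ^ (-η)) :=
    mul_le_mul_of_nonneg_left (hsq.trans (by gcongr)) hc₁
  unfold rateGain
  linarith

theorem eventually_rateDrift_ge {C₁ θ : ℝ} (hc₂ : 0 ≤ c₂) (hη : η ≤ 1) (hγ : ∀ n, 0 < γ n)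
    (hγge : ∀ᶠ n : ℕ in atTop, C₁ * (n : ℝ) ^ (-θ) ≤ γ n) :
    ∀ᶠ n : ℕ in atTop, c₂ / 2 * C₁ * (n : ℝ) ^ (1 - η - θ) ≤ rateDrift γ c₂ η n := by
  filter_upwards [eventually_gt_atTop 0, hγge] with n hn hγn
  have hx : (0 : ℝ) < n := Nat.cast_pos.2 hn
  calc c₂ / 2 * C₁ * (n : ℝ) ^ (1 - η - θ)
        = c₂ / 2 * (C₁ * (n : ℝ) ^ (-θ)) * (n : ℝ) ^ (1 - η) := by
        rw [show 1 - η - θ = -θ + (1 - η) by ring, Real.rpow_add hx]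
        ring
    _ ≤ rateDrift γ c₂ η n := by
        unfold rateDrift
        have := (hγ n).le
        gcongr
        linarith

theorem summable_rateError {C₁ C₂ θ : ℝ} (hc₁ : 0 ≤ c₁) (hc₂ : 0 < c₂) (hc₃ : 0 ≤ c₃)
    (hC₁ : 0 < C₁) (hp : 1 < p) (hθ : 1 / 2 ≤ θ) (hη₀ : 0 ≤ η) (hη₁ : η ≤ 1) (h2θ : 2 - 2 * θ < η)
    (hpθ : θ + p - 2 < η * (p - 1)) (hγ : ∀ n, 0 < γ n)
    (hγge : ∀ᶠ n : ℕ in atTop, C₁ * (n : ℝ) ^ (-θ) ≤ γ n)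
    (hγle : ∀ᶠ n : ℕ in atTop, γ n ≤ C₂ * (n : ℝ) ^ (-θ)) :
    Summable (rateError γ c₁ c₂ c₃ η p) := by
  have hexp : -η + (-η - (1 - η - θ)) * (p - 1)⁻¹ < -1 := by
    have : (θ - 1) * (p - 1)⁻¹ < η - 1 := by
      rw [← div_eq_mul_inv, div_lt_iff₀ (by linarith)]
      linarith
    linarith
  refine .add (summable_mul_div_rpow (rateGain_nonneg hc₁ hη₁) (rateDrift_pos hc₂ hγ)
    (by positivity) (by simp only [inv_nonneg]; linarith)
    (eventually_rateGain_le hc₁ hη₀ hη₁ hθ hγ hγle) (eventually_rateDrift_ge hc₂.le hη₁ hγ hγge)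
    hexp) ?_
  refine summable_of_eventually_le_mul_rpow (fun n => by have := hγ n; positivity) ?_
    (by linarith : 1 - η - 2 * θ < -1) (C := c₃ * (2 * C₂ ^ 2))
  filter_upwards [eventually_rpow_mul_sq_le hη₀ hη₁ hγ hγle] with n hn
  rw [mul_assoc, mul_assoc]
  gcongr

end

theorem stmt_11 {Ω : Type*} {m0 : MeasurableSpace Ω} (μ : Measure Ω) [IsProbabilityMeasure μ]
    (ℱ : Filtration ℕ m0) (Y : ℕ → Ω → ℝ) (γ : ℕ → ℝ)
    (c₁ c₂ c₃ β θ : ℝ)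
    (hc₁ : 0 ≤ c₁) (hc₃ : 0 ≤ c₃) (hc₂ : 0 < c₂)
    (hβ : 1/2 < β ∧ β ≤ 1) (hθ : 1/2 < θ ∧ θ < 1)
    (hγpos : ∀ n, 0 < γ n)
    (hγΘ : ∃ C₁ C₂ : ℝ, 0 < C₁ ∧ 0 < C₂ ∧ ∀ n : ℕ, 1 ≤ n →
      C₁ * (n : ℝ) ^ (-θ) ≤ γ n ∧ γ n ≤ C₂ * (n : ℝ) ^ (-θ))
    (hY : ∀ n ω, 0 ≤ Y n ω)
    (hYad : Adapted ℱ Y)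
    (hint : ∀ n, Integrable (Y n) μ)
    (hrec : ∀ n : ℕ, ∀ᵐ ω ∂μ,
      (μ[Y (n+1) | ℱ n]) ω ≤ (1 + c₁ * γ n ^ 2) * Y n ω - c₂ * γ n * Y n ω ^ (2*β) + c₃ * γ n ^ 2) :
    ∀ η : ℝ, max (2 - 2*θ) ((θ + 2*β - 2)/(2*β - 1)) < η → η < 1 →
      ∀ᵐ ω ∂μ, Tendsto (fun n : ℕ => (n : ℝ) ^ (1 - η) * Y n ω) atTop (nhds 0) := by
  obtain ⟨C₁, C₂, hC₁, -, hγb⟩ := hγΘ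
  intro η hη hη₁
  have hp : 1 < 2 * β := by linarith [hβ.1]
  have h2θ : 2 - 2 * θ < η := (le_max_left _ _).trans_lt hη
  have hpθ : θ + 2 * β - 2 < η * (2 * β - 1) :=
    (div_lt_iff₀ (by linarith)).1 ((le_max_right _ _).trans_lt hη)
  have hγge : ∀ᶠ n : ℕ in atTop, C₁ * (n : ℝ) ^ (-θ) ≤ γ n :=
    eventually_atTop.2 ⟨1, fun n hn => (hγb n hn).1⟩
  have hγle : ∀ᶠ n : ℕ in atTop, γ n ≤ C₂ * (n : ℝ) ^ (-θ) :=
    eventually_atTop.2 ⟨1, fun n hn => (hγb n hn).2⟩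
  have hYp_meas : ∀ n, Measurable[ℱ n] fun ω => Y n ω ^ (2 * β) := fun n => (hYad n).pow_const _
  have hYp_int : ∀ n, Integrable (fun ω => Y n ω ^ (2 * β)) μ := fun n =>
    integrable_of_condExp_le_sub (ae_of_all _ (hY (n + 1))) (hint n)
      ((hYp_meas n).mono (ℱ.le n) le_rfl).aestronglyMeasurable
      (ae_of_all _ fun ω => Real.rpow_nonneg (hY n ω) _) (mul_pos hc₂ (hγpos n)) (hrec n)
  filter_upwards [ae_tendsto_and_summable_of_condExp_le
    (V := fun n ω => (n : ℝ) ^ (1 - η) * Y n ω)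
    (U := fun n ω => rateDrift γ c₂ η n * Y n ω ^ (2 * β))
    (fun n => (hYad n).stronglyMeasurable.const_mul _)
    (fun n => (hYp_meas n).stronglyMeasurable.const_mul _)
    (fun n => (hint n).const_mul _) (fun n => (hYp_int n).const_mul _)
    (fun n ω => mul_nonneg (by positivity) (hY n ω))
    (fun n ω => mul_nonneg (rateDrift_pos hc₂ hγpos n).le (Real.rpow_nonneg (hY n ω) _))
    (rateError_nonneg hc₁ hc₂ hc₃ hη₁.le hγpos)
    (summable_rateError hc₁ hc₂ hc₃ hC₁ hp hθ.1.le (by linarith) hη₁.le h2θ hpθ hγpos hγge hγle)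
    fun n => ae_condExp_weighted_le hc₁ hc₂ hη₁.le hγpos hp n (hY n) (hrec n)]
    with ω ⟨⟨L, hL⟩, hsum⟩
  obtain rfl : L = 0 := eq_zero_of_tendsto_rpow_mul_of_summable (fun n => hY n ω) (by linarith)
    (by positivity) (eventually_rateDrift_ge hc₂.le hη₁.le hγpos hγge) (by nlinarith) hL hsum
  exact hL
end

section
/- Let f : ℝ^d → ℝ be continuous, X* ⊂ ℝ^d compact, with f(x*) = l for all x* ∈ X*. Suppose for each x* ∈ X* there are r_{x*} > 0, β_{x*} ∈ [1/2, 1], c_{x*} > 0 such that f(x) > l for all x in the closed ball B_{r_{x*}}(x*) \ X* and ‖∇f(x)‖ ≥ c_{x*}·(f(x) - l)^{β_{x*}} for all x ∈ B_{r_{x*}}(x*). Then there exist a uniform radius r > 0, exponent β ∈ [1/2, 1] and constant c > 0 such that for all x in the union of open balls of radius r around points of X*: f(x) > l whenever x ∉ X*, and ‖∇f(x)‖ ≥ c·(f(x) - l)^β. -/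
theorem stmt_12 {d : ℕ} (f : EuclideanSpace ℝ (Fin d) → ℝ)
    (Xs : Set (EuclideanSpace ℝ (Fin d))) (l : ℝ)
    (hf : ContDiff ℝ 1 f) (hXs : IsCompact Xs)
    (hlevel : ∀ x ∈ Xs, f x = l)
    (hloc : ∀ x' ∈ Xs, ∃ r > 0, ∃ β ∈ Set.Icc (1/2 : ℝ) 1, ∃ c > 0,
      (∀ x ∈ Metric.closedBall x' r, x ∉ Xs → l < f x) ∧
      (∀ x ∈ Metric.closedBall x' r, c * (f x - l) ^ β ≤ ‖gradient f x‖)) :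
    ∃ r > 0, ∃ β ∈ Set.Icc (1/2 : ℝ) 1, ∃ c > 0,
      ∀ x ∈ ⋃ x' ∈ Xs, Metric.ball x' r,
        (x ∉ Xs → l < f x) ∧ c * (f x - l) ^ β ≤ ‖gradient f x‖ := by
  -- local version with uniform exponent 1
  have key : ∀ x' ∈ Xs, ∃ ρ > 0, ∃ c > 0, ∀ x ∈ Metric.closedBall x' ρ,
      (x ∉ Xs → l < f x) ∧ c * (f x - l) ≤ ‖gradient f x‖ := by
    intro x' hx'
    obtain ⟨r, hr, β, hβ, c, hc, h1, h2⟩ := hloc x' hx'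
    have hcont : ∀ᶠ x in nhds x', f x < l + 1 :=
      (hf.continuous.continuousAt).eventually_lt continuousAt_const
        (by rw [hlevel x' hx']; linarith)
    obtain ⟨ε, hε, hball⟩ := Metric.eventually_nhds_iff_ball.mp hcont
    refine ⟨min r (ε/2), lt_min hr (by linarith), c, hc, ?_⟩
    intro x hx
    rw [Metric.mem_closedBall] at hx
    have hxr : x ∈ Metric.closedBall x' r :=
      Metric.mem_closedBall.mpr (le_trans hx (min_le_left _ _))
    have hxε : x ∈ Metric.ball x' ε :=
      Metric.mem_ball.mpr (lt_of_le_of_lt (le_trans hx (min_le_right _ _)) (by linarith))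
    have hfl1 : f x < l + 1 := hball x hxε
    have hfge : 0 ≤ f x - l := by
      by_cases hxs : x ∈ Xs
      · simp [hlevel x hxs]
      · linarith [h1 x hxr hxs]
    refine ⟨h1 x hxr, ?_⟩
    have h2' := h2 x hxr
    have hle : f x - l ≤ (f x - l) ^ β := by
      rcases eq_or_lt_of_le hfge with h0 | h0
      · rw [← h0, Real.zero_rpow (by nlinarith [hβ.1] : β ≠ 0)]
      · calc f x - l = (f x - l) ^ (1 : ℝ) := (Real.rpow_one _).symm
          _ ≤ (f x - l) ^ β :=
            Real.rpow_le_rpow_of_exponent_ge h0 (by linarith) hβ.2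
    calc c * (f x - l) ≤ c * (f x - l) ^ β := by nlinarith
      _ ≤ ‖gradient f x‖ := h2'
  choose ρ hρ c hc hkey using key
  rcases Xs.eq_empty_or_nonempty with hXe | hne
  · exact ⟨1, one_pos, 1, ⟨by norm_num, le_refl 1⟩, 1, one_pos, by simp [hXe]⟩
  obtain ⟨t, ht⟩ := hXs.elim_nhds_subcover'
    (fun x' hx' => Metric.ball x' (ρ x' hx' / 2))
    (fun x' hx' => Metric.ball_mem_nhds _ (by linarith [hρ x' hx']))
  have hT : t.Nonempty := by
    obtain ⟨x0, hx0⟩ := hne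
    have := ht hx0
    simp only [Set.mem_iUnion] at this
    obtain ⟨i, hi, _⟩ := this
    exact ⟨i, hi⟩
  refine ⟨t.inf' hT (fun i => ρ i.1 i.2 / 2),
    (Finset.lt_inf'_iff hT).mpr (fun i hi => by linarith [hρ i.1 i.2]),
    1, ⟨by norm_num, le_refl 1⟩,
    t.inf' hT (fun i => c i.1 i.2),
    (Finset.lt_inf'_iff hT).mpr (fun i hi => hc i.1 i.2), ?_⟩
  intro x hx
  simp only [Set.mem_iUnion, Metric.mem_ball] at hx
  obtain ⟨x'', hx'', hdx⟩ := hx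
  have := ht hx''
  simp only [Set.mem_iUnion, Metric.mem_ball] at this
  obtain ⟨i, hi, hdi⟩ := this
  have hrle : t.inf' hT (fun i => ρ i.1 i.2 / 2) ≤ ρ i.1 i.2 / 2 :=
    Finset.inf'_le _ hi
  have hxball : x ∈ Metric.closedBall i.1 (ρ i.1 i.2) := by
    rw [Metric.mem_closedBall]
    calc dist x i.1 ≤ dist x x'' + dist x'' i.1 := dist_triangle _ _ _
      _ ≤ ρ i.1 i.2 := by linarith
  obtain ⟨ha, hb⟩ := hkey i.1 i.2 x hxball
  refine ⟨ha, ?_⟩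
  rw [Real.rpow_one]
  have hfge : 0 ≤ f x - l := by
    by_cases hxs : x ∈ Xs
    · simp [hlevel x hxs]
    · linarith [ha hxs]
  have hcle : t.inf' hT (fun i => c i.1 i.2) ≤ c i.1 i.2 := Finset.inf'_le _ hi
  calc t.inf' hT (fun i => c i.1 i.2) * (f x - l) ≤ c i.1 i.2 * (f x - l) :=
        mul_le_mul_of_nonneg_right hcle hfge
    _ ≤ ‖gradient f x‖ := hb
end

section
/- Let X* ⊂ ℝ^d, r > 0, l ∈ ℝ, and define s = inf{ f(z) - l : z ∈ ⋃_{x*∈X*} B̄_{3r/4}(x*) \ ⋃_{x*∈X*} B_{r/2}(x*) }. Suppose x, y ∈ ℝ^d satisfy: (1) inf_{x*∈X*} ‖x - x*‖ < r/2, (2) f(y) - l < s, and (3) ‖x - y‖ ≤ r/4. Then inf_{x*∈X*} ‖y - x*‖ < r/2. -/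
theorem stmt_14 {d : ℕ} (f : EuclideanSpace ℝ (Fin d) → ℝ)
    (Xs : Set (EuclideanSpace ℝ (Fin d))) (hne : Xs.Nonempty) (l r : ℝ) (hr : 0 < r)
    (x y : EuclideanSpace ℝ (Fin d))
    (h1 : Metric.infDist x Xs < r/2)
    (h2 : (↑(f y - l) : EReal) <
      ⨅ z ∈ ((⋃ x' ∈ Xs, Metric.closedBall x' (3*r/4)) \ (⋃ x' ∈ Xs, Metric.ball x' (r/2))),
        (↑(f z - l) : EReal))
    (h3 : ‖x - y‖ ≤ r/4) :
    Metric.infDist y Xs < r/2 := by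
  by_contra hc
  push_neg at hc
  have hxy : dist y x ≤ r/4 := by
    rw [dist_comm, dist_eq_norm]; exact h3
  have hle : Metric.infDist y Xs ≤ Metric.infDist x Xs + dist y x :=
    Metric.infDist_le_infDist_add_dist
  have hlt : Metric.infDist y Xs < 3*r/4 := by linarith
  obtain ⟨x', hx', hdx'⟩ := (Metric.infDist_lt_iff hne).mp hlt
  have hmem : y ∈ ((⋃ x' ∈ Xs, Metric.closedBall x' (3*r/4)) \
      (⋃ x' ∈ Xs, Metric.ball x' (r/2))) := by
    constructor
    · exact Set.mem_biUnion hx' (Metric.mem_closedBall.mpr hdx'.le)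
    · intro hy
      obtain ⟨x'', hx'', hdx''⟩ := Set.mem_iUnion₂.mp hy
      have : Metric.infDist y Xs ≤ dist y x'' := Metric.infDist_le_dist_of_mem hx''
      have := Metric.mem_ball.mp hdx''
      linarith
  have : (⨅ z ∈ ((⋃ x' ∈ Xs, Metric.closedBall x' (3*r/4)) \
      (⋃ x' ∈ Xs, Metric.ball x' (r/2))), (↑(f z - l) : EReal)) ≤ (↑(f y - l) : EReal) :=
    iInf₂_le y hmem
  exact absurd (lt_of_lt_of_le h2 this) (lt_irrefl _)
end

section
/- Let (R_n)_{n≥0} be non-negative random variables with R_0 = 0, let ε > 0, define E_n = {R_k < ε for all k ≤ n} (so E_0 is the whole space) and Ẽ_n = E_{n-1} \ E_n. Suppose there is a constant K ≥ 0 and a sequence (γ_n) with E[R_n 1_{E_{n-1}}] ≤ E[R_{n-1} 1_{E_{n-2}}] + Kγ_n² - ε P(Ẽ_{n-1}) for all n ≥ 1 (with E_{-1} the whole space). If ∑_{n=1}^∞ γ_n² < δε/(2K) for some δ > 0, then P(E_n) ≥ 1 - δ/2 for all n. -/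
open MeasureTheory

theorem stmt_16 {Ω : Type*} {m0 : MeasurableSpace Ω} (μ : Measure Ω) [IsProbabilityMeasure μ]
    (R : ℕ → Ω → ℝ) (γ : ℕ → ℝ) (ε K δ : ℝ)
    (hε : 0 < ε) (hK : 0 ≤ K) (hδ : 0 < δ)
    (hR0 : ∀ ω, R 0 ω = 0) (hRpos : ∀ n ω, 0 ≤ R n ω)
    (hmeas : ∀ n, Measurable (R n)) (hint : ∀ n, Integrable (R n) μ)
    (hrec : ∀ n : ℕ, 1 ≤ n →
      ∫ ω in {ω | ∀ k ≤ n - 1, R k ω < ε}, R n ω ∂μ ≤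
        (∫ ω in {ω | ∀ k ≤ n - 2, R k ω < ε}, R (n-1) ω ∂μ) + K * γ n ^ 2 -
          ε * (μ ({ω | ∀ k ≤ n - 2, R k ω < ε} \ {ω | ∀ k ≤ n - 1, R k ω < ε})).toReal)
    (hsum : Summable (fun n : ℕ => γ (n+1) ^ 2))
    (htsum : (∑' n : ℕ, γ (n+1) ^ 2) < δ * ε / (2*K)) :
    ∀ n : ℕ, 1 - δ/2 ≤ (μ {ω | ∀ k ≤ n, R k ω < ε}).toReal := by
  have htsum0 : (0:ℝ) ≤ ∑' n : ℕ, γ (n+1) ^ 2 := tsum_nonneg fun n => sq_nonneg _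
  rcases eq_or_lt_of_le hK with hK0 | hKpos
  · exfalso
    rw [← hK0] at htsum
    norm_num at htsum
    linarith
  set E : ℕ → Set Ω := fun n => {ω | ∀ k ≤ n, R k ω < ε} with hEdef
  have hEm : ∀ n, MeasurableSet (E n) := by
    intro n
    have : E n = ⋂ k ∈ Set.Iic n, {ω | R k ω < ε} := by
      ext ω; simp [hEdef]
    rw [this]
    exact MeasurableSet.biInter (Set.to_countable _)
      fun k _ => measurableSet_lt (hmeas k) measurable_const
  have hE0 : (μ (E 0)).toReal = 1 := by
    have : E 0 = Set.univ := by
      ext ω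
      simp only [hEdef, Set.mem_setOf_eq, Set.mem_univ, iff_true, Nat.le_zero]
      rintro k rfl
      rw [hR0]; exact hε
    rw [this]
    simp
  have hEsub : ∀ m, E (m+1) ⊆ E m := fun m ω h k hk => h k (hk.trans (Nat.le_succ m))
  have hdiff : ∀ m, (μ (E m \ E (m+1))).toReal
      = (μ (E m)).toReal - (μ (E (m+1))).toReal := by
    intro m
    rw [measure_diff (hEsub m) (hEm (m+1)).nullMeasurableSet (measure_ne_top μ _),
      ENNReal.toReal_sub_of_le (measure_mono (hEsub m)) (measure_ne_top μ _)]
  have key : ∀ n, (∫ ω in E n, R (n+1) ω ∂μ) + ε * (1 - (μ (E n)).toReal)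
      ≤ K * ∑ k ∈ Finset.range (n+1), γ (k+1) ^ 2 := by
    intro n
    induction n with
    | zero =>
      have h1 := hrec 1 le_rfl
      rw [show (1:ℕ) - 1 = 0 from rfl] at h1
      have hz : (∫ ω in E 0, R 0 ω ∂μ) = 0 := by
        rw [show R 0 = fun _ => (0:ℝ) from funext hR0]; simp
      rw [hz, Set.diff_self] at h1
      simp only [measure_empty, ENNReal.toReal_zero, mul_zero, zero_add, sub_zero] at h1
      rw [hE0, show E 0 = {ω | R 0 ω < ε} by ext ω; simp [hEdef, Nat.le_zero]]
      simpa using h1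
    | succ n ih =>
      have h1 := hrec (n+2) (by omega)
      simp only [show n + 2 - 1 = n + 1 from rfl, show n + 2 - 2 = n from rfl] at h1
      have hd := hdiff n
      rw [Finset.sum_range_succ]
      have h2 : (∫ ω in E (n+1), R (n+2) ω ∂μ) ≤
          (∫ ω in E n, R (n+1) ω ∂μ) + K * γ (n+2) ^ 2 -
            ε * ((μ (E n)).toReal - (μ (E (n+1))).toReal) := by
        rw [← hd]; exact h1
      nlinarith [h2, ih]
  intro n
  have hS : 0 ≤ ∫ ω in E n, R (n+1) ω ∂μ :=
    setIntegral_nonneg (hEm n) fun ω _ => hRpos _ ω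
  have hsum_le : ∑ k ∈ Finset.range (n+1), γ (k+1) ^ 2 ≤ ∑' k : ℕ, γ (k+1) ^ 2 :=
    Summable.sum_le_tsum _ (fun k _ => sq_nonneg _) hsum
  have hkey := key n
  have hfin : K * ∑ k ∈ Finset.range (n+1), γ (k+1) ^ 2 ≤ δ * ε / 2 := by
    have h3 : K * ∑ k ∈ Finset.range (n+1), γ (k+1) ^ 2 ≤ K * (δ * ε / (2*K)) := by
      apply mul_le_mul_of_nonneg_left _ hK
      linarith
    have h4 : K * (δ * ε / (2*K)) = δ * ε / 2 := by
      field_simp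
    linarith [h3, h4.le, h4.ge]
  have : ε * (1 - (μ (E n)).toReal) ≤ δ * ε / 2 := by linarith
  nlinarith [this, hε]
end

section
/- (Local PL constant bound for softmax policy gradient, λ = 0.) Consider a finite discounted MDP with optimal value V*(δ_s) for each state s, uniquely optimal actions a*(s), and optimal reward gap Δ*(s) = Q*(s, a*(s)) - max_{a ≠ a*(s)} Q*(s,a) > 0. Let α ∈ (0,1) and set r = min_s μ(s) · min_s Δ*(s) · (1-α), where μ is an initial distribution with μ(s) > 0 for all s. If a policy π satisfies V*(μ) - V^π(μ) ≤ r, then π(a*(s)|s) ≥ α for every state s. -/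
/-!
Fix a state `s` and write `p = π(a*(s)|s)`. Every suboptimal action loses at least the gap `Δ s`,
so the performance relation gives `(1 - p) Δ s ≤ V*(s) - V^π(s)`; in particular `V^π ≤ V*`
statewise, so the single term `μ s (V*(s) - V^π(s))` is bounded by `V*(μ) - V^π(μ) ≤ r`.
Since `min μ · min Δ ≤ μ s Δ s`, this yields `min μ · min Δ · (1 - p) ≤ min μ · min Δ · (1 - α)`.
-/

open Finset

theorem apply_le_one_of_sum_eq_one {A : Type*} [Fintype A] {w : A → ℝ} (hw : ∀ a, 0 ≤ w a)
    (hsum : ∑ a, w a = 1) (b : A) : w b ≤ 1 :=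
  hsum ▸ single_le_sum (fun a _ => hw a) (mem_univ b)

theorem one_sub_apply_mul_le_sum_filter_ne {A : Type*} [Fintype A] [DecidableEq A]
    {w q : A → ℝ} {b : A} {d : ℝ} (hw : ∀ a, 0 ≤ w a) (hsum : ∑ a, w a = 1)
    (hq : ∀ a, a ≠ b → q a ≤ q b - d) :
    (1 - w b) * d ≤ ∑ a ∈ univ.filter (fun a => a ≠ b), w a * (q b - q a) := by
  rw [← hsum, ← sum_erase_eq_sub (mem_univ b), ← filter_ne', sum_mul]
  refine sum_le_sum fun a ha => mul_le_mul_of_nonneg_left ?_ (hw a)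
  linarith [hq a (mem_filter.1 ha).2]

theorem mul_sub_le_sum_mul_sub_sum_mul {S : Type*} [Fintype S] {μ x y : S → ℝ}
    (hμ : ∀ t, 0 ≤ μ t) (hxy : ∀ t, y t ≤ x t) (s : S) :
    μ s * (x s - y s) ≤ ∑ t, μ t * x t - ∑ t, μ t * y t := by
  rw [← sum_sub_distrib]
  simp only [← mul_sub]
  exact single_le_sum (fun t _ => mul_nonneg (hμ t) (sub_nonneg.2 (hxy t))) (mem_univ s)

theorem inf'_mul_inf'_le_mul {S : Type*} [Fintype S] [Nonempty S] {f g : S → ℝ}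
    (hf : ∀ t, 0 < f t) (hg : ∀ t, 0 < g t) (s : S) :
    univ.inf' univ_nonempty f * univ.inf' univ_nonempty g ≤ f s * g s :=
  mul_le_mul (inf'_le f (mem_univ s)) (inf'_le g (mem_univ s))
    ((lt_inf'_iff _).2 fun t _ => hg t).le (hf s).le

theorem inf'_mul_inf'_pos {S : Type*} [Fintype S] [Nonempty S] {f g : S → ℝ}
    (hf : ∀ t, 0 < f t) (hg : ∀ t, 0 < g t) :
    0 < univ.inf' univ_nonempty f * univ.inf' univ_nonempty g :=
  mul_pos ((lt_inf'_iff _).2 fun t _ => hf t) ((lt_inf'_iff _).2 fun t _ => hg t)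

theorem stmt_17_general {S A : Type*} [Fintype S] [Fintype A] [DecidableEq A] [Nonempty S]
    (Q : S → A → ℝ) (Vstar Vpi : S → ℝ) (astar : S → A) (Δ : S → ℝ)
    (pol : S → A → ℝ) (μ : S → ℝ) (α : ℝ)
    (hμpos : ∀ s, 0 < μ s)
    (hπpos : ∀ s a, 0 ≤ pol s a) (hπsum : ∀ s, ∑ a, pol s a = 1)
    (hΔpos : ∀ s, 0 < Δ s)
    (hgap : ∀ s a, a ≠ astar s → Q s a ≤ Q s (astar s) - Δ s)
    (hperf : ∀ s, ∑ a ∈ Finset.univ.filter (fun a => a ≠ astar s),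
      pol s a * (Q s (astar s) - Q s a) ≤ Vstar s - Vpi s)
    (hclose : (∑ s, μ s * Vstar s) - (∑ s, μ s * Vpi s) ≤
      (Finset.univ.inf' Finset.univ_nonempty μ) *
      (Finset.univ.inf' Finset.univ_nonempty Δ) * (1 - α)) :
    ∀ s, α ≤ pol s (astar s) := by
  have hp_le (s : S) : pol s (astar s) ≤ 1 := apply_le_one_of_sum_eq_one (hπpos s) (hπsum s) _
  have hloss (s : S) : (1 - pol s (astar s)) * Δ s ≤ Vstar s - Vpi s :=
    (one_sub_apply_mul_le_sum_filter_ne (hπpos s) (hπsum s) (hgap s)).trans (hperf s)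
  have hmono (s : S) : Vpi s ≤ Vstar s := by
    nlinarith [hloss s, hp_le s, hΔpos s]
  intro s
  have hone_sub : 0 ≤ 1 - pol s (astar s) := sub_nonneg.2 (hp_le s)
  have hscaled : univ.inf' univ_nonempty μ * univ.inf' univ_nonempty Δ * (1 - pol s (astar s)) ≤
      univ.inf' univ_nonempty μ * univ.inf' univ_nonempty Δ * (1 - α) :=
    calc _ ≤ μ s * Δ s * (1 - pol s (astar s)) :=
          mul_le_mul_of_nonneg_right (inf'_mul_inf'_le_mul hμpos hΔpos s) hone_sub
      _ = μ s * ((1 - pol s (astar s)) * Δ s) := by ring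
      _ ≤ μ s * (Vstar s - Vpi s) := mul_le_mul_of_nonneg_left (hloss s) (hμpos s).le
      _ ≤ (∑ t, μ t * Vstar t) - (∑ t, μ t * Vpi t) :=
          mul_sub_le_sum_mul_sub_sum_mul (fun t => (hμpos t).le) hmono s
      _ ≤ _ := hclose
  linarith [le_of_mul_le_mul_left hscaled (inf'_mul_inf'_pos hμpos hΔpos)]

theorem stmt_17 {S A : Type*} [Fintype S] [Fintype A] [DecidableEq A] [Nonempty S] [Nonempty A]
    (Q : S → A → ℝ) (Vstar Vpi : S → ℝ) (astar : S → A) (Δ : S → ℝ)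
    (pol : S → A → ℝ) (μ : S → ℝ) (α : ℝ)
    (hα : 0 < α ∧ α < 1)
    (hμpos : ∀ s, 0 < μ s) (hμsum : ∑ s, μ s = 1)
    (hπpos : ∀ s a, 0 ≤ pol s a) (hπsum : ∀ s, ∑ a, pol s a = 1)
    (hΔpos : ∀ s, 0 < Δ s)
    (hgap : ∀ s a, a ≠ astar s → Q s a ≤ Q s (astar s) - Δ s)
    (hperf : ∀ s, ∑ a ∈ Finset.univ.filter (fun a => a ≠ astar s),
      pol s a * (Q s (astar s) - Q s a) ≤ Vstar s - Vpi s)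
    (hmono : ∀ s, Vpi s ≤ Vstar s)
    (hclose : (∑ s, μ s * Vstar s) - (∑ s, μ s * Vpi s) ≤
      (Finset.univ.inf' Finset.univ_nonempty μ) *
      (Finset.univ.inf' Finset.univ_nonempty Δ) * (1 - α)) :
    ∀ s, α ≤ pol s (astar s) :=
  stmt_17_general Q Vstar Vpi astar Δ pol μ α hμpos hπpos hπsum hΔpos hgap hperf hclose
end

section
/- Let (Y_n) be non-negative random variables adapted to a filtration, c > 0, and suppose E[Y_{n+1} | F_n] ≤ (1 - c·γ_n) Y_n + c₃·γ_n² for all n ≥ N, where γ_n = Θ(n^{-θ}) with θ ∈ (1/2, 1) and c₃ ≥ 0. Then for any η ∈ (2 - 2θ, 1), the sequence of expectations satisfies E[Y_n] ∈ o(n^{-(1-η)}), i.e., n^{1-η}·E[Y_n] → 0 as n → ∞. -/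
/-!
Taking expectations turns the conditional recursion into the deterministic recursion
`A (n + 1) ≤ (1 - c γₙ) Aₙ + c₃ γₙ²` for `Aₙ = E[Yₙ]`. Put `p = 1 - η < θ`. Since
`(n + 1) ^ p ≤ n ^ p (1 + 1/n)` and eventually `1/n ≤ c γₙ / 2` (this is where `θ < 1` enters),
the weighted sequence `wₙ = n ^ p Aₙ` satisfies `w (n + 1) ≤ (1 - c γₙ / 2) wₙ + eₙ` with
`eₙ = c₃ (n + 1) ^ p γₙ² = o(γₙ)` (this is where `p < θ` enters). As `∑ γₙ = ∞`, the excess of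
`wₙ` over any `ε > 0` is eventually bounded by a multiple of `exp (-∑ₖ c γₖ / 2) → 0`.
-/

open Filter MeasureTheory Topology

theorem tendsto_zero_of_le_one_sub_mul {v d : ℕ → ℝ} (hv : ∀ k, 0 ≤ v k) (hd : ∀ k, 0 ≤ d k)
    (hd_sum : ¬ Summable d) (hrec : ∀ k, v (k + 1) ≤ (1 - d k) * v k) :
    Tendsto v atTop (𝓝 0) := by
  have hbound : ∀ k, v k ≤ v 0 * Real.exp (-∑ j ∈ Finset.range k, d j) := by
    intro k
    induction k with
    | zero => simp
    | succ k ih =>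
      calc v (k + 1) ≤ (1 - d k) * v k := hrec k
        _ ≤ Real.exp (-d k) * (v 0 * Real.exp (-∑ j ∈ Finset.range k, d j)) := by
          gcongr
          · exact hv k
          · linarith [Real.add_one_le_exp (-d k)]
        _ = v 0 * Real.exp (-∑ j ∈ Finset.range (k + 1), d j) := by
          rw [Finset.sum_range_succ, neg_add, Real.exp_add]; ring
  have hsum : Tendsto (fun k => ∑ j ∈ Finset.range k, d j) atTop atTop :=
    (not_summable_iff_tendsto_nat_atTop_of_nonneg hd).mp hd_sum
  have hexp : Tendsto (fun k => v 0 * Real.exp (-∑ j ∈ Finset.range k, d j)) atTop (𝓝 0) := by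
    simpa using (Real.tendsto_exp_atBot.comp (tendsto_neg_atTop_atBot.comp hsum)).const_mul (v 0)
  exact squeeze_zero hv hbound hexp

theorem tendsto_zero_of_le_one_sub_mul_add_s18 {a d e : ℕ → ℝ} (ha : ∀ n, 0 ≤ a n)
    (hd : ∀ᶠ n in atTop, 0 ≤ d n ∧ d n ≤ 1) (hd_sum : ¬ Summable d)
    (hrec : ∀ᶠ n in atTop, a (n + 1) ≤ (1 - d n) * a n + e n)
    (he : ∀ ε > 0, ∀ᶠ n in atTop, e n ≤ ε * d n) :
    Tendsto a atTop (𝓝 0) := by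
  refine tendsto_order.2 ⟨fun b hb => .of_forall fun n => hb.trans_le (ha n), fun b hb => ?_⟩
  obtain ⟨M, hM⟩ := eventually_atTop.1 ((hd.and hrec).and (he (b / 2) (by positivity)))
  -- the excess of `a` over `b / 2` contracts by the factor `1 - d n`
  set v : ℕ → ℝ := fun n => max (a n - b / 2) 0
  have hv : Tendsto (fun k => v (k + M)) atTop (𝓝 0) := by
    refine tendsto_zero_of_le_one_sub_mul (d := fun k => d (k + M)) (fun k => le_max_right _ _)
      (fun k => (hM _ (Nat.le_add_left M k)).1.1.1) (by rwa [summable_nat_add_iff]) fun k => ?_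
    obtain ⟨⟨⟨hd0, hd1⟩, hr⟩, hε⟩ := hM (k + M) (Nat.le_add_left M k)
    rw [Nat.add_right_comm]
    refine max_le ?_ (mul_nonneg (by linarith) (le_max_right _ _))
    calc a (k + M + 1) - b / 2 ≤ (1 - d (k + M)) * (a (k + M) - b / 2) := by linarith
      _ ≤ (1 - d (k + M)) * v (k + M) :=
        mul_le_mul_of_nonneg_left (le_max_left _ _) (by linarith)
  filter_upwards [((tendsto_add_atTop_iff_nat M).1 hv).eventually_lt_const (half_pos hb)]
    with n hn
  linarith [le_max_left (a n - b / 2) 0]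

lemma add_one_rpow_le_rpow_mul {x p : ℝ} (hx : 0 < x) (hp : p ≤ 1) :
    (x + 1) ^ p ≤ x ^ p * (1 + x⁻¹) := by
  have hbase : 1 ≤ (x + 1) / x := by rw [le_div_iff₀ hx]; linarith
  calc (x + 1) ^ p = x ^ p * ((x + 1) / x) ^ p := by
        rw [← Real.mul_rpow hx.le (by positivity), mul_div_cancel₀ _ hx.ne']
    _ ≤ x ^ p * ((x + 1) / x) := by
        gcongr
        simpa using Real.rpow_le_rpow_of_exponent_le hbase hp
    _ = x ^ p * (1 + x⁻¹) := by rw [add_div, div_self hx.ne', one_div]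

lemma one_sub_mul_add_one_rpow_le {x g p : ℝ} (hx : 0 < x) (hp : p ≤ 1) (hg0 : 0 ≤ g)
    (hg1 : g ≤ 1) (hgx : 2 ≤ g * x) :
    (1 - g) * (x + 1) ^ p ≤ (1 - g / 2) * x ^ p := by
  have hinv : x⁻¹ ≤ g / 2 := by
    rw [inv_le_iff_one_le_mul₀ hx]; linarith
  calc (1 - g) * (x + 1) ^ p ≤ (1 - g) * (x ^ p * (1 + x⁻¹)) :=
        mul_le_mul_of_nonneg_left (add_one_rpow_le_rpow_mul hx hp) (by linarith)
    _ = x ^ p * (1 - g + (1 - g) * x⁻¹) := by ring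
    _ ≤ x ^ p * (1 - g / 2) := by
        gcongr
        nlinarith [inv_nonneg.2 hx.le]
    _ = (1 - g / 2) * x ^ p := mul_comm _ _

lemma tendsto_rpow_mul_of_le_rpow_neg {γ : ℕ → ℝ} {C θ p : ℝ} (hγ0 : ∀ᶠ n in atTop, 0 ≤ γ n)
    (hγ : ∀ᶠ n : ℕ in atTop, γ n ≤ C * (n : ℝ) ^ (-θ)) (hp : p < θ) :
    Tendsto (fun n : ℕ => (n : ℝ) ^ p * γ n) atTop (𝓝 0) := by
  have hlim : Tendsto (fun n : ℕ => C * (n : ℝ) ^ (-(θ - p))) atTop (𝓝 0) := by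
    simpa using ((tendsto_rpow_neg_atTop (sub_pos.2 hp)).comp
      tendsto_natCast_atTop_atTop).const_mul C
  refine squeeze_zero' ?_ ?_ hlim
  · filter_upwards [hγ0] with n hn using by positivity
  · filter_upwards [hγ, eventually_gt_atTop 0] with n hn hpos
    have hn0 : (0 : ℝ) < n := Nat.cast_pos.2 hpos
    calc (n : ℝ) ^ p * γ n ≤ (n : ℝ) ^ p * (C * (n : ℝ) ^ (-θ)) := by gcongr
      _ = C * (n : ℝ) ^ (-(θ - p)) := by
        rw [neg_sub, sub_eq_neg_add, Real.rpow_add hn0]; ring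

lemma tendsto_add_one_rpow_mul_of_le_rpow_neg {γ : ℕ → ℝ} {C θ p : ℝ}
    (hγ0 : ∀ᶠ n in atTop, 0 ≤ γ n) (hγ : ∀ᶠ n : ℕ in atTop, γ n ≤ C * (n : ℝ) ^ (-θ))
    (hp : p < θ) (hp1 : p ≤ 1) :
    Tendsto (fun n : ℕ => ((n : ℝ) + 1) ^ p * γ n) atTop (𝓝 0) := by
  have hlim := (tendsto_rpow_mul_of_le_rpow_neg hγ0 hγ hp).const_mul 2
  rw [mul_zero] at hlim
  refine squeeze_zero' ?_ ?_ hlim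
  · filter_upwards [hγ0] with n h0 using by positivity
  · filter_upwards [hγ0, eventually_ge_atTop 1] with n h0 hn
    have hn1 : (1 : ℝ) ≤ n := Nat.one_le_cast.2 hn
    calc ((n : ℝ) + 1) ^ p * γ n ≤ (n : ℝ) ^ p * (1 + (n : ℝ)⁻¹) * γ n := by
          gcongr; exact add_one_rpow_le_rpow_mul (by linarith) hp1
      _ ≤ (n : ℝ) ^ p * 2 * γ n := by
          gcongr; linarith [inv_le_one_of_one_le₀ hn1]
      _ = 2 * ((n : ℝ) ^ p * γ n) := by ring

lemma tendsto_natCast_mul_atTop_of_rpow_neg_le {γ : ℕ → ℝ} {C θ : ℝ} (hC : 0 < C) (hθ : θ < 1)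
    (hγ : ∀ᶠ n : ℕ in atTop, C * (n : ℝ) ^ (-θ) ≤ γ n) :
    Tendsto (fun n : ℕ => (n : ℝ) * γ n) atTop atTop := by
  have hlim : Tendsto (fun n : ℕ => C * (n : ℝ) ^ (1 - θ)) atTop atTop :=
    ((tendsto_rpow_atTop (sub_pos.2 hθ)).comp tendsto_natCast_atTop_atTop).const_mul_atTop hC
  refine tendsto_atTop_mono' atTop ?_ hlim
  filter_upwards [hγ] with n hn
  calc C * (n : ℝ) ^ (1 - θ) = (n : ℝ) * (C * (n : ℝ) ^ (-θ)) := by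
        rw [sub_eq_add_neg, Real.rpow_add' n.cast_nonneg (by linarith), Real.rpow_one]; ring
    _ ≤ (n : ℝ) * γ n := by gcongr

lemma not_summable_of_rpow_neg_le {γ : ℕ → ℝ} {C θ : ℝ} (hC : 0 < C) (hθ : θ ≤ 1)
    (hγ : ∀ᶠ n : ℕ in atTop, C * (n : ℝ) ^ (-θ) ≤ γ n) : ¬ Summable γ := by
  intro hs
  have : Summable fun n : ℕ => C * (n : ℝ) ^ (-θ) :=
    hs.of_norm_bounded_eventually_nat (by
      filter_upwards [hγ] with n hn
      rwa [Real.norm_of_nonneg (by positivity)])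
  have := Real.summable_nat_rpow.1 ((summable_mul_left_iff hC.ne').1 this)
  linarith

theorem tendsto_rpow_mul_of_le_one_sub_mul_add {A γ : ℕ → ℝ} {c c₃ θ p C₁ C₂ : ℝ}
    (hA : ∀ n, 0 ≤ A n) (hc : 0 < c) (hθ0 : 0 < θ) (hθ1 : θ < 1) (hpθ : p < θ) (hC₁ : 0 < C₁)
    (hγ : ∀ᶠ n : ℕ in atTop, C₁ * (n : ℝ) ^ (-θ) ≤ γ n ∧ γ n ≤ C₂ * (n : ℝ) ^ (-θ))
    (hrec : ∀ᶠ n in atTop, A (n + 1) ≤ (1 - c * γ n) * A n + c₃ * γ n ^ 2) :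
    Tendsto (fun n : ℕ => (n : ℝ) ^ p * A n) atTop (𝓝 0) := by
  have hγ0 : ∀ᶠ n in atTop, 0 ≤ γ n := by
    filter_upwards [hγ] with n hn using (by positivity : 0 ≤ C₁ * (n : ℝ) ^ (-θ)).trans hn.1
  have hγ_lim : Tendsto γ atTop (𝓝 0) := by
    simpa using tendsto_rpow_mul_of_le_rpow_neg hγ0 (hγ.mono fun _ h => h.2) hθ0
  have hγ_small : ∀ᶠ n in atTop, c * γ n ≤ 1 := by
    have hcγ : Tendsto (fun n => c * γ n) atTop (𝓝 0) := by simpa using hγ_lim.const_mul c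
    exact hcγ.eventually_le_const zero_lt_one
  have hγ_large : ∀ᶠ n : ℕ in atTop, 2 ≤ c * γ n * n := by
    have hnγ := tendsto_natCast_mul_atTop_of_rpow_neg_le hC₁ hθ1 (hγ.mono fun _ h => h.1)
    filter_upwards [(hnγ.const_mul_atTop hc).eventually_ge_atTop 2] with n hn
    linarith
  have herr : Tendsto (fun n : ℕ => c₃ * (((n : ℝ) + 1) ^ p * γ n)) atTop (𝓝 0) := by
    simpa using (tendsto_add_one_rpow_mul_of_le_rpow_neg hγ0 (hγ.mono fun _ h => h.2) hpθ
      (hpθ.trans hθ1).le).const_mul c₃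
  refine tendsto_zero_of_le_one_sub_mul_add_s18 (d := fun n => c / 2 * γ n)
    (e := fun n => c₃ * (((n : ℝ) + 1) ^ p * γ n) * γ n)
    (fun n => mul_nonneg (by positivity) (hA n)) ?_
    (not_summable_of_rpow_neg_le (C := c / 2 * C₁) (by positivity) hθ1.le ?_) ?_ fun ε hε => ?_
  · filter_upwards [hγ0, hγ_small] with n h0 h1
    constructor <;> nlinarith
  · filter_upwards [hγ] with n hn
    rw [mul_assoc]
    exact mul_le_mul_of_nonneg_left hn.1 (by positivity)
  · filter_upwards [hrec, hγ0, hγ_small, hγ_large, eventually_gt_atTop 0] with n hn h0 h1 h2 hpos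
    push_cast
    calc ((n : ℝ) + 1) ^ p * A (n + 1)
        ≤ ((n : ℝ) + 1) ^ p * ((1 - c * γ n) * A n + c₃ * γ n ^ 2) := by gcongr
      _ = (1 - c * γ n) * ((n : ℝ) + 1) ^ p * A n + c₃ * (((n : ℝ) + 1) ^ p * γ n) * γ n := by
        ring
      _ ≤ (1 - c * γ n / 2) * (n : ℝ) ^ p * A n + c₃ * (((n : ℝ) + 1) ^ p * γ n) * γ n := by
        gcongr ?_ * _ + _
        · exact hA n
        · exact one_sub_mul_add_one_rpow_le (Nat.cast_pos.2 hpos) (hpθ.trans hθ1).le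
            (by positivity) h1 h2
      _ = _ := by ring
  · filter_upwards [herr.eventually_le_const (by positivity : 0 < ε * (c / 2)), hγ0]
      with n hn h0
    calc c₃ * (((n : ℝ) + 1) ^ p * γ n) * γ n ≤ ε * (c / 2) * γ n := by gcongr
      _ = ε * (c / 2 * γ n) := by ring

lemma integral_le_of_condExp_le {Ω : Type*} {m m0 : MeasurableSpace Ω} {μ : Measure Ω}
    [IsProbabilityMeasure μ] {X Z : Ω → ℝ} {a b : ℝ} (hm : m ≤ m0) (hZ : Integrable Z μ)
    (h : ∀ᵐ ω ∂μ, (μ[X | m]) ω ≤ a * Z ω + b) :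
    ∫ ω, X ω ∂μ ≤ a * ∫ ω, Z ω ∂μ + b := by
  calc ∫ ω, X ω ∂μ = ∫ ω, (μ[X | m]) ω ∂μ := (integral_condExp hm).symm
    _ ≤ ∫ ω, (a * Z ω + b) ∂μ :=
      integral_mono_ae integrable_condExp ((hZ.const_mul a).add (integrable_const b)) h
    _ = a * ∫ ω, Z ω ∂μ + b := by
      rw [integral_add (hZ.const_mul a) (integrable_const b), integral_const_mul]
      simp

theorem stmt_18_general {Ω : Type*} {m0 : MeasurableSpace Ω} (μ : Measure Ω) [IsProbabilityMeasure μ]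
    (ℱ : Filtration ℕ m0) (Y : ℕ → Ω → ℝ) (γ : ℕ → ℝ) (c c₃ θ : ℝ) (N : ℕ)
    (hc : 0 < c) (hθ : 1/2 < θ ∧ θ < 1)
    (hγΘ : ∃ C₁ C₂ : ℝ, 0 < C₁ ∧ 0 < C₂ ∧ ∀ n : ℕ, 1 ≤ n →
      C₁ * (n : ℝ) ^ (-θ) ≤ γ n ∧ γ n ≤ C₂ * (n : ℝ) ^ (-θ))
    (hY : ∀ n ω, 0 ≤ Y n ω) (hint : ∀ n, Integrable (Y n) μ)
    (hrec : ∀ n : ℕ, N ≤ n → ∀ᵐ ω ∂μ,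
      (μ[Y (n+1) | ℱ n]) ω ≤ (1 - c * γ n) * Y n ω + c₃ * γ n ^ 2) :
    ∀ η : ℝ, 2 - 2*θ < η → η < 1 →
      Tendsto (fun n : ℕ => (n : ℝ) ^ (1 - η) * ∫ ω, Y n ω ∂μ) atTop (nhds 0) := by
  intro η hη₁ hη₂
  obtain ⟨C₁, C₂, hC₁, -, hγ⟩ := hγΘ
  refine tendsto_rpow_mul_of_le_one_sub_mul_add (c₃ := c₃) (fun n => integral_nonneg (hY n)) hc
    (by linarith) hθ.2 (by linarith) hC₁ (eventually_atTop.2 ⟨1, hγ⟩) ?_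
  filter_upwards [eventually_ge_atTop N] with n hn
  exact integral_le_of_condExp_le (ℱ.le n) (hint n) (hrec n hn)

theorem stmt_18 {Ω : Type*} {m0 : MeasurableSpace Ω} (μ : Measure Ω) [IsProbabilityMeasure μ]
    (ℱ : Filtration ℕ m0) (Y : ℕ → Ω → ℝ) (γ : ℕ → ℝ) (c c₃ θ : ℝ) (N : ℕ)
    (hc : 0 < c) (hc₃ : 0 ≤ c₃) (hθ : 1/2 < θ ∧ θ < 1)
    (hγΘ : ∃ C₁ C₂ : ℝ, 0 < C₁ ∧ 0 < C₂ ∧ ∀ n : ℕ, 1 ≤ n →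
      C₁ * (n : ℝ) ^ (-θ) ≤ γ n ∧ γ n ≤ C₂ * (n : ℝ) ^ (-θ))
    (hY : ∀ n ω, 0 ≤ Y n ω) (hYad : Adapted ℱ Y) (hint : ∀ n, Integrable (Y n) μ)
    (hrec : ∀ n : ℕ, N ≤ n → ∀ᵐ ω ∂μ,
      (μ[Y (n+1) | ℱ n]) ω ≤ (1 - c * γ n) * Y n ω + c₃ * γ n ^ 2) :
    ∀ η : ℝ, 2 - 2*θ < η → η < 1 →
      Tendsto (fun n : ℕ => (n : ℝ) ^ (1 - η) * ∫ ω, Y n ω ∂μ) atTop (nhds 0) :=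
  stmt_18_general μ ℱ Y γ c c₃ θ N hc hθ hγΘ hY hint hrec
end
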